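/- In every Mīmāṃsā model, the axiom schema (2): □(ψ→¬φ) → ¬(O(φ/θ) ∧ O(ψ/θ)) is valid. -/

import Mathlib

/-- Formulas of bMDL: atoms, ⊥, →, □, and dyadic O(·/·). -/
inductive Fm (V : Type) : Type
  | var : V → Fm V
  | bot : Fm V
  | imp : Fm V → Fm V → Fm V
  | box : Fm V → Fm V
  | ob  : Fm V → Fm V → Fm V

namespace Fm
variable {V : Type}
def neg (φ : Fm V) : Fm V := φ.imp .bot
def top : Fm V := (Fm.bot (V := V)).neg
def and (φ ψ : Fm V) : Fm V := (φ.imp ψ.neg).neg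
def or  (φ ψ : Fm V) : Fm V := φ.neg.imp ψ
def iff (φ ψ : Fm V) : Fm V := (φ.imp ψ).and (ψ.imp φ)
end Fm

/-- A Mīmāṃsā model: an m-frame (nonempty W, reflexive transitive R,
neighbourhood map η satisfying conditions (ii)–(v)) with a valuation. -/
structure MModel (V W : Type) where
  ne : Nonempty W
  R : W → W → Prop
  refl : ∀ w, R w w
  trans : ∀ {a b c}, R a b → R b c → R a c
  η : W → Set (Set W × Set W)
  η_sub : ∀ w X Y, (X, Y) ∈ η w → X ⊆ {v | R w v} ∧ Y ⊆ {v | R w v}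
  η_mono : ∀ w X Y Z, (X, Z) ∈ η w → X ⊆ Y → Y ⊆ {v | R w v} → (Y, Z) ∈ η w
  η_nonempty : ∀ w X, ((∅ : Set W), X) ∉ η w
  η_noconflict : ∀ w X Y, (X, Y) ∈ η w → (Xᶜ ∩ {v | R w v}, Y) ∉ η w
  σ : W → Set V

/-- Truth of a formula at a world. -/
def MModel.sat {V W : Type} (M : MModel V W) : W → Fm V → Prop
  | w, .var p => p ∈ M.σ w
  | _, .bot => False
  | w, .imp φ ψ => M.sat w φ → M.sat w ψ
  | w, .box φ => ∀ v, M.R w v → M.sat v φ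
  | w, .ob φ ψ =>
      ({v | M.sat v φ} ∩ {v | M.R w v}, {v | M.sat v ψ} ∩ {v | M.R w v}) ∈ M.η w

/-- Validity in a model: truth at every world. -/
def MModel.valid {V W : Type} (M : MModel V W) (φ : Fm V) : Prop :=
  ∀ w, M.sat w φ

namespace MModel

variable {V W : Type} (M : MModel V W)

/-- Two obligations under the same condition can be fulfilled together: otherwise monotonicity
would turn the first into an obligation to violate the second, which `η_noconflict` forbids. -/
theorem inter_nonempty_of_mem_η {w : W} {X Y Z : Set W} (hX : (X, Z) ∈ M.η w)
    (hY : (Y, Z) ∈ M.η w) : (X ∩ Y).Nonempty := by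
  by_contra hempty
  have hXsub : X ⊆ Yᶜ ∩ {v | M.R w v} := fun v hv =>
    ⟨fun hvY => hempty ⟨v, hv, hvY⟩, (M.η_sub w X Z hX).1 hv⟩
  exact M.η_noconflict w Y Z hY (M.η_mono w X _ Z hX hXsub Set.inter_subset_right)

@[simp]
theorem sat_imp {w : W} {φ ψ : Fm V} : M.sat w (φ.imp ψ) ↔ (M.sat w φ → M.sat w ψ) := Iff.rfl

@[simp]
theorem sat_neg {w : W} {φ : Fm V} : M.sat w φ.neg ↔ ¬M.sat w φ := Iff.rfl

@[simp]
theorem sat_and {w : W} {φ ψ : Fm V} : M.sat w (φ.and ψ) ↔ M.sat w φ ∧ M.sat w ψ := by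
  simp only [Fm.and, sat_neg, sat_imp]
  tauto

@[simp]
theorem sat_box {w : W} {φ : Fm V} : M.sat w φ.box ↔ ∀ v, M.R w v → M.sat v φ := Iff.rfl

end MModel

/-- Axiom (2): □(ψ→¬φ) → ¬(O(φ/θ) ∧ O(ψ/θ)) is valid in every m-model. -/
theorem stmt2 {V W : Type} (M : MModel V W) (φ ψ θ : Fm V) :
    M.valid ((Fm.box (ψ.imp φ.neg)).imp ((Fm.ob φ θ).and (Fm.ob ψ θ)).neg) := by
  intro w
  simp only [M.sat_imp, M.sat_neg, M.sat_and, M.sat_box]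
  rintro hbox ⟨hφ, hψ⟩
  obtain ⟨v, ⟨hvφ, hvR⟩, hvψ, -⟩ := M.inter_nonempty_of_mem_η hφ hψ
  exact hbox v hvR hvψ hvφ
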